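/- arXiv:math/0701432 — 8 statements merged into one kernel-verified Lean document; each statement's English description precedes it below -/
import Mathlib

section
/- Let A be an n'×n' Hermitian matrix with e₀ zero eigenvalues, and let v₁,…,vₙ ∈ ℂ^{n'} be linearly independent vectors with vₗ*Avⱼ = 0 for all 1 ≤ j,l ≤ n. Let E = span(v₁,…,vₙ) and F = span(Av₁,…,Avₙ). Then dim F ≥ n − e₀, E ∩ F = {0}, and if n' + e₀ = 2n then ℂ^{n'} = E ⊕ F. -/
/-!
The restriction of `A` to `E` has kernel inside `ker A`, of dimension `e₀`, so its image `F`
has dimension at least `n - e₀`. If `Au ∈ E` with `u ∈ E`, then `‖Au‖² = u* A (Au) = 0` by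
isotropy of `E`, so `E ∩ F = 0`; when `n' + e₀ = 2n` the dimensions of `E` and `F` add up to at
least `n'`, which forces `E ⊕ F = ℂ^{n'}`.
-/

open Matrix Submodule Module

theorem Submodule.finrank_le_finrank_map_add_finrank_ker {K V W : Type*} [DivisionRing K]
    [AddCommGroup V] [Module K V] [AddCommGroup W] [Module K W] [FiniteDimensional K V]
    (f : V →ₗ[K] W) (E : Submodule K V) :
    finrank K E ≤ finrank K (E.map f) + finrank K (LinearMap.ker f) := by
  rw [← (f.domRestrict E).finrank_range_add_finrank_ker, LinearMap.range_domRestrict,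
    LinearMap.ker_domRestrict, ← finrank_map_subtype_eq, map_comap_subtype]
  gcongr
  exact finrank_mono inf_le_right

theorem Matrix.IsHermitian.finrank_ker_mulVecLin {𝕜 m : Type*} [RCLike 𝕜] [Fintype m]
    [DecidableEq m] {A : Matrix m m 𝕜} (hA : A.IsHermitian) :
    finrank 𝕜 (LinearMap.ker A.mulVecLin) = Fintype.card {i // hA.eigenvalues i = 0} := by
  have := A.mulVecLin.finrank_range_add_finrank_ker
  rw [← Matrix.rank, hA.rank_eq_card_non_zero_eigs, Module.finrank_fintype_fun_eq_card,
    Fintype.card_subtype_compl] at this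
  have := Fintype.card_subtype_le fun i => hA.eigenvalues i = 0
  omega

theorem Matrix.star_dotProduct_mulVec_eq_zero_of_mem_span {R m ι : Type*} [CommRing R]
    [StarRing R] [Fintype m] (A : Matrix m m R) {v : ι → m → R}
    (h : ∀ j l, star (v l) ⬝ᵥ A *ᵥ v j = 0) {x y : m → R}
    (hx : x ∈ span R (Set.range v)) (hy : y ∈ span R (Set.range v)) :
    star x ⬝ᵥ A *ᵥ y = 0 := by
  induction hx, hy using span_induction₂ with
  | mem_mem x y hx hy =>
    obtain ⟨l, rfl⟩ := hx
    obtain ⟨j, rfl⟩ := hy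
    exact h j l
  | zero_left => simp
  | zero_right => simp
  | add_left _ _ _ _ _ _ h₁ h₂ => simp [add_dotProduct, h₁, h₂]
  | add_right _ _ _ _ _ _ h₁ h₂ => simp [mulVec_add, h₁, h₂]
  | smul_left _ _ _ _ _ h => simp [smul_dotProduct, h]
  | smul_right _ _ _ _ _ h => simp [mulVec_smul, h]

theorem Matrix.IsHermitian.disjoint_map_mulVecLin {R m : Type*} [Field R] [PartialOrder R]
    [StarRing R] [StarOrderedRing R] [Fintype m] {A : Matrix m m R} (hA : A.IsHermitian)
    {E : Submodule R (m → R)} (hE : ∀ x ∈ E, ∀ y ∈ E, star x ⬝ᵥ A *ᵥ y = 0) :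
    Disjoint E (E.map A.mulVecLin) := by
  rw [disjoint_iff_inf_le]
  rintro _ ⟨hAu, u, hu, rfl⟩
  have : star (A *ᵥ u) ⬝ᵥ A *ᵥ u = 0 := by
    rw [star_mulVec, ← dotProduct_mulVec, hA.eq]
    exact hE _ hu _ hAu
  simpa using dotProduct_star_self_eq_zero.mp this

/-- If `v₁,…,vₙ` are linearly independent and pairwise `A`-isotropic for a Hermitian
matrix `A` with `e₀` zero eigenvalues, then `F = span(Av₁,…,Avₙ)` has dimension at least
`n - e₀`, `E ∩ F = 0`, and if `n' + e₀ = 2n` then `ℂ^{n'} = E ⊕ F`. -/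
theorem stmt1 (n n' : ℕ) (A : Matrix (Fin n') (Fin n') ℂ) (hA : A.IsHermitian)
    (v : Fin n → (Fin n' → ℂ)) (hv : LinearIndependent ℂ v)
    (h : ∀ j l : Fin n, dotProduct (star (v l)) (A.mulVec (v j)) = 0) :
    n - Nat.card {i : Fin n' // hA.eigenvalues i = 0} ≤
        Module.finrank ℂ (Submodule.span ℂ (Set.range fun j => A.mulVec (v j))) ∧
      Submodule.span ℂ (Set.range v) ⊓
          Submodule.span ℂ (Set.range fun j => A.mulVec (v j)) = ⊥ ∧
      (n' + Nat.card {i : Fin n' // hA.eigenvalues i = 0} = 2 * n →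
        IsCompl (Submodule.span ℂ (Set.range v))
          (Submodule.span ℂ (Set.range fun j => A.mulVec (v j)))) := by
  set E := span ℂ (Set.range v)
  have hF : span ℂ (Set.range fun j => A *ᵥ v j) = E.map A.mulVecLin := by
    rw [map_span, ← Set.range_comp]
    rfl
  have hE : finrank ℂ E = n := by rw [finrank_span_eq_card hv, Fintype.card_fin]
  have he₀ : Nat.card {i // hA.eigenvalues i = 0} = finrank ℂ (LinearMap.ker A.mulVecLin) := by
    rw [Nat.card_eq_fintype_card, hA.finrank_ker_mulVecLin]
  have hdim := E.finrank_le_finrank_map_add_finrank_ker A.mulVecLin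
  have hdisj : Disjoint E (E.map A.mulVecLin) := open ComplexOrder in
    hA.disjoint_map_mulVecLin fun x hx y hy => A.star_dotProduct_mulVec_eq_zero_of_mem_span h hx hy
  rw [hF, he₀]
  refine ⟨by omega, disjoint_iff.mp hdisj, fun hn => (isCompl_iff_disjoint _ _ ?_).mpr hdisj⟩
  rw [finrank_fin_fun]
  omega
end

section
/- Let A be an n×n Hermitian matrix, A' an n'×n' Hermitian matrix, B an n'×n complex matrix, and a a nonzero real number such that B*A'B = aA. Then min(e₊(A), e₋(A)) ≤ min(e₊(A'), e₋(A')), where e₊ and e₋ denote the number of positive and negative eigenvalues. -/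
open Matrix

section Aux

/-- Extension by zero of a function on a subtype, as a linear map. -/
noncomputable def extByZero (n : ℕ) (P : Fin n → Prop) [DecidablePred P] :
    ({i // P i} → ℂ) →ₗ[ℂ] (Fin n → ℂ) where
  toFun c i := if h : P i then c ⟨i, h⟩ else 0
  map_add' c d := by funext i; by_cases h : P i <;> simp [h]
  map_smul' r c := by funext i; by_cases h : P i <;> simp [h]

lemma herm_form {n : ℕ} {M : Matrix (Fin n) (Fin n) ℂ} (hM : M.IsHermitian) (x : Fin n → ℂ) :
    star x ⬝ᵥ M *ᵥ x =
      ((∑ i, hM.eigenvalues i *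
        Complex.normSq
          ((star (hM.eigenvectorUnitary : Matrix (Fin n) (Fin n) ℂ) *ᵥ x) i) : ℝ) : ℂ) := by
  set U := (hM.eigenvectorUnitary : Matrix (Fin n) (Fin n) ℂ) with hU
  set y := star U *ᵥ x with hy
  have h1 : M *ᵥ x = U *ᵥ (diagonal (RCLike.ofReal ∘ hM.eigenvalues) *ᵥ y) := by
    conv_lhs => rw [hM.spectral_theorem, Unitary.conjStarAlgAut_apply]
    rw [← mulVec_mulVec, ← mulVec_mulVec]
  have h2 : star x ⬝ᵥ (U *ᵥ (diagonal (RCLike.ofReal ∘ hM.eigenvalues) *ᵥ y))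
      = star y ⬝ᵥ (diagonal (RCLike.ofReal ∘ hM.eigenvalues) *ᵥ y) := by
    rw [dotProduct_mulVec]
    congr 1
    rw [hy, star_mulVec, Matrix.star_eq_conjTranspose, conjTranspose_conjTranspose]
  rw [h1, h2]
  simp only [dotProduct, Pi.star_apply, Function.comp_apply, mulVec_diagonal]
  push_cast
  refine Finset.sum_congr rfl fun i _ => ?_
  have hcast : (RCLike.ofReal (hM.eigenvalues i) : ℂ) = ((hM.eigenvalues i : ℝ) : ℂ) := rfl
  rw [hcast, Complex.normSq_eq_conj_mul_self, RCLike.star_def]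
  ring

lemma key_ineq {n n' : ℕ} {A : Matrix (Fin n) (Fin n) ℂ} (hA : A.IsHermitian)
    {A' : Matrix (Fin n') (Fin n') ℂ} (hA' : A'.IsHermitian)
    (B : Matrix (Fin n') (Fin n) ℂ) (a ε ε' : ℝ) (hε : ε * ε = 1)
    (haε : 0 < a * ε * ε')
    (hBA : Bᴴ * A' * B = (a : ℂ) • A) :
    Nat.card {i // 0 < ε * hA.eigenvalues i} ≤ Nat.card {i // 0 < ε' * hA'.eigenvalues i} := by
  classical
  set U := (hA.eigenvectorUnitary : Matrix (Fin n) (Fin n) ℂ) with hU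
  set U' := (hA'.eigenvectorUnitary : Matrix (Fin n') (Fin n') ℂ) with hU'
  set P : Fin n → Prop := fun i => 0 < ε * hA.eigenvalues i with hP
  set P' : Fin n' → Prop := fun i => 0 < ε' * hA'.eigenvalues i with hP'
  let F : ({i // P i} → ℂ) →ₗ[ℂ] ({i // P' i} → ℂ) :=
    (LinearMap.funLeft ℂ ℂ Subtype.val) ∘ₗ (mulVecLin (star U')) ∘ₗ mulVecLin B ∘ₗ
      mulVecLin U ∘ₗ extByZero n P
  have hinj : Function.Injective F := by
    rw [injective_iff_map_eq_zero]
    intro c hc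
    by_contra hc0
    set e := extByZero n P c with he
    set x := U *ᵥ e with hx
    set z := B *ᵥ x with hz
    set y := star U' *ᵥ z with hy
    have hyz : ∀ i : Fin n', P' i → y i = 0 := by
      intro i hi
      have := congrFun hc ⟨i, hi⟩
      simpa [F, hy, hz, hx, he, mulVecLin_apply] using this
    -- the two quadratic form computations
    have h1 : star z ⬝ᵥ A' *ᵥ z = ((∑ i, hA'.eigenvalues i * Complex.normSq (y i) : ℝ) : ℂ) :=
      herm_form hA' z
    have h2 : star z ⬝ᵥ A' *ᵥ z = (a : ℂ) * (star x ⬝ᵥ A *ᵥ x) := by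
      rw [hz, star_mulVec, ← dotProduct_mulVec, mulVec_mulVec, mulVec_mulVec, hBA,
        smul_mulVec, dotProduct_smul, smul_eq_mul]
    have hUe : star U *ᵥ x = e := by
      rw [hx, mulVec_mulVec, Unitary.coe_star_mul_self, one_mulVec]
    have h3 : star x ⬝ᵥ A *ᵥ x = ((∑ i, hA.eigenvalues i * Complex.normSq (e i) : ℝ) : ℂ) := by
      rw [herm_form hA x, hUe]
    have hreal : (∑ i, hA'.eigenvalues i * Complex.normSq (y i))
        = a * (∑ i, hA.eigenvalues i * Complex.normSq (e i)) := by
      have := h1.symm.trans (h2.trans (by rw [h3]))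
      exact_mod_cast this
    -- sign analysis
    have hT : 0 < ε * (∑ i, hA.eigenvalues i * Complex.normSq (e i)) := by
      rw [Finset.mul_sum]
      obtain ⟨j, hj⟩ : ∃ j, c j ≠ 0 := by
        by_contra h
        push_neg at h
        exact hc0 (funext h)
      refine Finset.sum_pos' (fun i _ => ?_) ⟨j.1, Finset.mem_univ _, ?_⟩
      · by_cases h : P i
        · have : e i = c ⟨i, h⟩ := by simp [he, extByZero, h]
          rw [this]
          have := Complex.normSq_nonneg (c ⟨i, h⟩)
          nlinarith [h]
        · have : e i = 0 := by simp [he, extByZero, h]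
          simp [this]
      · have he' : e j.1 = c j := by simp [he, extByZero, j.2]
        have h0 : 0 < Complex.normSq (c j) := by
          simpa [Complex.normSq_pos] using hj
        have := j.2
        rw [he']
        nlinarith [this]
    have hS : ε' * (∑ i, hA'.eigenvalues i * Complex.normSq (y i)) ≤ 0 := by
      rw [Finset.mul_sum]
      refine Finset.sum_nonpos fun i _ => ?_
      by_cases h : P' i
      · simp [hyz i h]
      · have h1 : ε' * hA'.eigenvalues i ≤ 0 := le_of_not_gt h
        have h2 := Complex.normSq_nonneg (y i)
        nlinarith
    have : 0 < ε' * (∑ i, hA'.eigenvalues i * Complex.normSq (y i)) := by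
      rw [hreal]
      have : ε' * (a * (∑ i, hA.eigenvalues i * Complex.normSq (e i)))
          = (a * ε * ε') * (ε * (∑ i, hA.eigenvalues i * Complex.normSq (e i))) := by
        linear_combination (-(a * ε' * (∑ i, hA.eigenvalues i * Complex.normSq (e i)))) * hε
      rw [this]
      exact mul_pos haε hT
    linarith
  have hle := LinearMap.finrank_le_finrank_of_injective hinj
  rw [Module.finrank_fintype_fun_eq_card, Module.finrank_fintype_fun_eq_card] at hle
  rw [Nat.card_eq_fintype_card, Nat.card_eq_fintype_card]
  exact hle

end Aux

/-- If `B* A' B = a A` with `a ≠ 0` real and `A`, `A'` Hermitian,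
then `min(e₊(A), e₋(A)) ≤ min(e₊(A'), e₋(A'))`. -/
theorem stmt2 (n n' : ℕ) (A : Matrix (Fin n) (Fin n) ℂ) (hA : A.IsHermitian)
    (A' : Matrix (Fin n') (Fin n') ℂ) (hA' : A'.IsHermitian)
    (B : Matrix (Fin n') (Fin n) ℂ) (a : ℝ) (ha : a ≠ 0)
    (hBA : Bᴴ * A' * B = (a : ℂ) • A) :
    min (Nat.card {i : Fin n // 0 < hA.eigenvalues i})
        (Nat.card {i : Fin n // hA.eigenvalues i < 0}) ≤
      min (Nat.card {i : Fin n' // 0 < hA'.eigenvalues i})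
        (Nat.card {i : Fin n' // hA'.eigenvalues i < 0}) := by
  have ep : ∀ (m : ℕ) (M : Matrix (Fin m) (Fin m) ℂ) (hM : M.IsHermitian),
      Nat.card {i : Fin m // 0 < hM.eigenvalues i}
        = Nat.card {i : Fin m // 0 < (1 : ℝ) * hM.eigenvalues i} := by
    intro m M hM
    exact Nat.card_congr (Equiv.subtypeEquivRight fun i => by rw [one_mul])
  have en : ∀ (m : ℕ) (M : Matrix (Fin m) (Fin m) ℂ) (hM : M.IsHermitian),
      Nat.card {i : Fin m // hM.eigenvalues i < 0}
        = Nat.card {i : Fin m // 0 < (-1 : ℝ) * hM.eigenvalues i} := by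
    intro m M hM
    exact Nat.card_congr (Equiv.subtypeEquivRight fun i => by
      rw [neg_one_mul, neg_pos])
  rw [ep n A hA, en n A hA, ep n' A' hA', en n' A' hA']
  rcases ha.lt_or_gt with h | h
  · -- a < 0 : pos(A) ≤ neg(A'), neg(A) ≤ pos(A')
    have h1 := key_ineq hA hA' B a 1 (-1) (by norm_num) (by nlinarith) hBA
    have h2 := key_ineq hA hA' B a (-1) 1 (by norm_num) (by nlinarith) hBA
    rw [min_comm (Nat.card {i : Fin n' // 0 < (1:ℝ) * hA'.eigenvalues i})]
    exact min_le_min h1 h2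
  · have h1 := key_ineq hA hA' B a 1 1 (by norm_num) (by nlinarith) hBA
    have h2 := key_ineq hA hA' B a (-1) (-1) (by norm_num) (by nlinarith) hBA
    exact min_le_min h1 h2
end

section
/- Define ρ(z,w) = Im w − |z|² on ℂ² and ρ'(z'₁,z'₂,w') = Im w' + |z'₁|² − |z'₂|² on ℂ³. Let H(z,w) = (z + z² + (i/2)w, z − z² − (i/2)w, −2zw). Then ρ'(H(z,w)) = −2(z + z̄)·ρ(z,w) for all (z,w) ∈ ℂ². -/
open ComplexConjugate

/-- With `ρ(z,w) = Im w - |z|²` and `ρ'(z'₁,z'₂,w') = Im w' + |z'₁|² - |z'₂|²`, the map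
`H(z,w) = (z + z² + (i/2)w, z - z² - (i/2)w, -2zw)` satisfies
`ρ' ∘ H = -2(z + z̄)ρ`. Here `Im w = (w - w̄)/(2i)` and `|u|² = u ū`, so all
expressions are complex-valued polynomials in `z, z̄, w, w̄`. -/
theorem stmt5 (z w : ℂ) :
    (let ρ : ℂ := (w - conj w) / (2 * Complex.I) - z * conj z
     let f₁ : ℂ := z + z ^ 2 + Complex.I / 2 * w
     let f₂ : ℂ := z - z ^ 2 - Complex.I / 2 * w
     let g : ℂ := -2 * z * w
     (g - conj g) / (2 * Complex.I) + f₁ * conj f₁ - f₂ * conj f₂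
       = -2 * (z + conj z) * ρ) := by
  simp only [map_mul, map_sub, map_add, map_neg, map_pow, map_div₀, map_ofNat,
    Complex.conj_I, map_one]
  have hI : Complex.I ≠ 0 := Complex.I_ne_zero
  field_simp
  have h3 : Complex.I ^ 3 = -Complex.I := by
    simp [pow_succ, Complex.I_mul_I]
  ring_nf
  rw [Complex.I_sq]
  ring
end

section
/- Define ρ(z,w) = Im w − |z|² on ℂ² and ρ'(z',w') = Im w' + |z'₁|² − |z'₂|² − |z'₃|² − |z'₄|² on ℂ⁵. Let H(z,w) = (iz + zw, −iz + zw, w, √2·z², i w²). Then ρ'(H(z,w)) = −2·ρ(z,w)² for all (z,w) ∈ ℂ². -/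
open ComplexConjugate

/-- With `ρ(z,w) = Im w - |z|²` and
`ρ'(z',w') = Im w' + |z'₁|² - |z'₂|² - |z'₃|² - |z'₄|²`, the map
`H(z,w) = (iz + zw, -iz + zw, w, √2 z², i w²)` satisfies `ρ' ∘ H = -2 ρ²`. -/
theorem stmt6 (z w : ℂ) :
    (let ρ : ℂ := (w - conj w) / (2 * Complex.I) - z * conj z
     let f₁ : ℂ := Complex.I * z + z * w
     let f₂ : ℂ := -Complex.I * z + z * w
     let f₃ : ℂ := w
     let f₄ : ℂ := (Real.sqrt 2 : ℂ) * z ^ 2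
     let g : ℂ := Complex.I * w ^ 2
     (g - conj g) / (2 * Complex.I) + f₁ * conj f₁ - f₂ * conj f₂ - f₃ * conj f₃
         - f₄ * conj f₄
       = -2 * ρ ^ 2) := by
  simp only
  have h2 : ((Real.sqrt 2 : ℝ) : ℂ) * ((Real.sqrt 2 : ℝ) : ℂ) = 2 := by
    exact_mod_cast Real.mul_self_sqrt (by norm_num)

  have hI : Complex.I ≠ 0 := Complex.I_ne_zero
  field_simp [map_add, map_mul, map_sub, map_neg, map_pow, Complex.conj_I, Complex.conj_ofReal]
  ring_nf
  rw [Complex.I_sq]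
  ring_nf
  have h2p : ((Real.sqrt 2 : ℝ) : ℂ) ^ 2 = 2 := by rw [sq]; exact h2
  have h3 : Complex.I ^ 3 = -Complex.I := by simp [pow_succ, Complex.I_mul_I]
  have h4 : Complex.I ^ 4 = 1 := by simp [pow_succ, Complex.I_mul_I]
  rw [h3]
  simp only [map_add, map_mul, map_neg, map_sub, map_pow, Complex.conj_I, Complex.conj_ofReal]
  ring_nf
  simp only [Complex.I_sq, h2p, h3, h4]
  ring
end

section
/- Define ρ(Z) = |Z₁|² + |Z₂|² + |Z₃|² − 1 on ℂ³ and ρ'(z',w') = Im w' − (|z'₁|² + |z'₂|² + |z'₃|² − |z'₄|²) on ℂ⁵. Let H(Z) = (Z₁Z₂, Z₂², Z₂Z₃, Z₂, 0). Then ρ'(H(Z)) = −|Z₂|²·ρ(Z) for all Z ∈ ℂ³. In particular H maps the unit sphere {ρ = 0} into the hyperquadric {ρ' = 0}, and the differential of ρ' ∘ H vanishes at Z = 0. -/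
open ComplexConjugate

theorem HasFDerivAt.mul_of_eq_zero {𝕜 E 𝔸 : Type*} [NontriviallyNormedField 𝕜]
    [NormedAddCommGroup E] [NormedSpace 𝕜 E] [NormedRing 𝔸] [NormedAlgebra 𝕜 𝔸]
    {f g : E → 𝔸} {f' g' : E →L[𝕜] 𝔸} {x : E}
    (hf : HasFDerivAt f f' x) (hg : HasFDerivAt g g' x) (hfx : f x = 0) :
    HasFDerivAt (fun y => f y * g y) (f'.smulRight (g x)) x := by
  convert hf.fun_mul' hg using 1
  ext v
  simp [hfx]

/-- With `ρ(Z) = |Z₁|² + |Z₂|² + |Z₃|² - 1` and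
`ρ'(z',w') = Im w' - (|z'₁|² + |z'₂|² + |z'₃|² - |z'₄|²)`, the map
`H(Z) = (Z₁Z₂, Z₂², Z₂Z₃, Z₂, 0)` satisfies `ρ' ∘ H = -|Z₂|² ρ`; in particular `H` maps
the unit sphere into the hyperquadric and `d(ρ' ∘ H)` vanishes at `0`. -/
theorem stmt7 :
    let ρ : ℂ × ℂ × ℂ → ℂ := fun Z =>
      Z.1 * conj Z.1 + Z.2.1 * conj Z.2.1 + Z.2.2 * conj Z.2.2 - 1
    let ρ' : ℂ × ℂ × ℂ × ℂ × ℂ → ℂ := fun p =>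
      (p.2.2.2.2 - conj p.2.2.2.2) / (2 * Complex.I)
        - (p.1 * conj p.1 + p.2.1 * conj p.2.1 + p.2.2.1 * conj p.2.2.1
            - p.2.2.2.1 * conj p.2.2.2.1)
    let H : ℂ × ℂ × ℂ → ℂ × ℂ × ℂ × ℂ × ℂ := fun Z =>
      (Z.1 * Z.2.1, Z.2.1 ^ 2, Z.2.1 * Z.2.2, Z.2.1, 0)
    (∀ Z, ρ' (H Z) = -(Z.2.1 * conj Z.2.1) * ρ Z) ∧
    (∀ Z, ρ Z = 0 → ρ' (H Z) = 0) ∧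
    fderiv ℝ (fun Z => ρ' (H Z)) 0 = 0 := by
  intro ρ ρ' H
  have pullback : ∀ Z, ρ' (H Z) = -(Z.2.1 * conj Z.2.1) * ρ Z := fun Z => by
    simp only [ρ, ρ', H, map_mul, map_pow, map_zero]
    ring
  refine ⟨pullback, fun Z hZ => by rw [pullback, hZ, mul_zero], ?_⟩
  have hZ₂ : HasFDerivAt (fun Z : ℂ × ℂ × ℂ => Z.2.1)
      (ContinuousLinearMap.fst ℝ ℂ ℂ ∘L ContinuousLinearMap.snd ℝ ℂ (ℂ × ℂ)) 0 :=
    hasFDerivAt_snd.fst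
  have hconj : HasFDerivAt (fun Z : ℂ × ℂ × ℂ => conj Z.2.1)
      ((Complex.conjCLE : ℂ →L[ℝ] ℂ) ∘L _) 0 :=
    Complex.conjCLE.hasFDerivAt.comp 0 hZ₂
  have hnegNormSq : HasFDerivAt (fun Z : ℂ × ℂ × ℂ => -(Z.2.1 * conj Z.2.1))
      (0 : (ℂ × ℂ × ℂ) →L[ℝ] ℂ) 0 := by
    simpa using (hZ₂.mul_of_eq_zero hconj rfl).fun_neg
  have hρ : DifferentiableAt ℝ ρ 0 := by
    have hdconj : Differentiable ℝ (fun z : ℂ => conj z) := Complex.conjCLE.differentiable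
    simp only [ρ]
    fun_prop
  rw [funext pullback]
  simpa using (hnegNormSq.mul_of_eq_zero hρ.hasFDerivAt (by simp)).fderiv
end

section
/- Define ρ(z,w) = Im w on ℂ² and ρ'(z',w') = Im w' − |z'|² on ℂ². Let H(z,w) = (w, i w²). Then ρ'(H(z,w)) = −2·ρ(z,w)² for all (z,w) ∈ ℂ². In particular H maps the Levi-flat hypersurface {Im w = 0} into {Im w' = |z'|²} and is nowhere transversal to it, yet H(ℂ²) is not contained in {ρ' = 0}. -/
open ComplexConjugate

/-- With `ρ(z,w) = Im w` and `ρ'(z',w') = Im w' - |z'|²`, the map `H(z,w) = (w, i w²)`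
satisfies `ρ' ∘ H = -2 ρ²`; in particular `H` maps `{Im w = 0}` into `{Im w' = |z'|²}`,
is nowhere transversal to it (the differential of `ρ' ∘ H` vanishes at every point of
`{ρ = 0}`), yet `H(ℂ²)` is not contained in `{ρ' = 0}`. -/
theorem stmt8 :
    let ρ : ℂ × ℂ → ℂ := fun p => (p.2 - conj p.2) / (2 * Complex.I)
    let ρ' : ℂ × ℂ → ℂ := fun p => (p.2 - conj p.2) / (2 * Complex.I) - p.1 * conj p.1
    let H : ℂ × ℂ → ℂ × ℂ := fun p => (p.2, Complex.I * p.2 ^ 2)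
    (∀ p, ρ' (H p) = -2 * ρ p ^ 2) ∧
    (∀ p, ρ p = 0 → ρ' (H p) = 0) ∧
    (∀ p, ρ p = 0 → fderiv ℝ (fun q => ρ' (H q)) p = 0) ∧
    ¬ (∀ p, ρ' (H p) = 0) := by
  intro ρ ρ' H
  have key : ∀ p, ρ' (H p) = -2 * ρ p ^ 2 := by
    intro p
    simp only [ρ, ρ', H, map_mul, Complex.conj_I, map_pow]
    field_simp
    ring_nf
    rw [Complex.I_sq]
    ring
  refine ⟨key, fun p hp => by rw [key p, hp]; ring, ?_, ?_⟩
  · intro p hp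
    have h1 : HasFDerivAt (fun q : ℂ × ℂ => q.2) (ContinuousLinearMap.snd ℝ ℂ ℂ) p :=
      hasFDerivAt_snd
    have h2 : HasFDerivAt (fun q : ℂ × ℂ => conj q.2)
        ((Complex.conjCLE : ℂ →L[ℝ] ℂ).comp (ContinuousLinearMap.snd ℝ ℂ ℂ)) p :=
      (Complex.conjCLE.hasFDerivAt).comp p h1
    have h3 := (h1.sub h2).mul_const ((2 * Complex.I)⁻¹)
    have h4 := (h3.mul h3).const_mul (-2 : ℂ)
    have heq : (fun q => ρ' (H q)) = fun q : ℂ × ℂ =>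
        (-2 : ℂ) * ((q.2 - conj q.2) * (2 * Complex.I)⁻¹ *
          ((q.2 - conj q.2) * (2 * Complex.I)⁻¹)) := by
      funext q
      rw [key q]
      simp only [ρ, div_eq_mul_inv]
      ring
    have hp' : (p.2 - conj p.2) * (2 * Complex.I)⁻¹ = 0 := by
      have : (p.2 - conj p.2) / (2 * Complex.I) = 0 := hp
      rwa [div_eq_mul_inv] at this
    have h5 := h4.fderiv
    simp only [Pi.sub_apply, Pi.mul_apply] at h5
    rw [heq, h5, hp']
    ext x <;> simp
  · intro h
    have := h (0, Complex.I)
    rw [key (0, Complex.I)] at this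
    simp [ρ, Complex.ext_iff] at this
end

section
/- Let T: (ℂ^{2n+1})⁴ → ℂ be the multilinear form determined on a basis v₁,…,v_{n+1}, u₁,…,uₙ by T(vⱼ, v̄ⱼ, vₖ, v̄ₖ) = T(vⱼ, v̄ₖ, vₖ, v̄ⱼ) = 2δⱼδₖ for j ≠ k, = 4 for j = k (1 ≤ j,k ≤ n), and T = 0 on all other quadruples of basis vectors, extended with the symmetries T(X₁,Y₁,X₂,Y₂) = T(X₂,Y₁,X₁,Y₂) = T(X₁,Y₂,X₂,Y₁). Then with f(z,w) = Σⱼ zⱼvⱼ + w v_{n+1} + Σⱼ zⱼw uⱼ, one has T(f(z,w), f̄(χ,τ), f(z,w), f̄(χ,τ)) = 4 Σ_{1≤j,k≤n} δⱼδₖ zⱼzₖχⱼχₖ as polynomials in (z,w,χ,τ). -/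
/-!
Expanding both arguments in the basis `v, u`, multilinearity turns `T(f, f̄, f, f̄)` into a
quadruple sum over basis indices. By the vanishing hypothesis only the quadruples
`(vⱼ, v̄ⱼ, vₖ, v̄ₖ)` and `(vⱼ, v̄ₖ, vₖ, v̄ⱼ)` with `j, k ≤ n` survive, so the coefficients
of `v_{n+1}` and of the `uⱼ` drop out and the sum collapses to a double sum over `(j, k)`.
For `j ≠ k` each pattern contributes `2δⱼδₖ zⱼzₖχⱼχₖ`; for `j = k` the two patterns are the
same quadruple, contributing `4 zⱼ²χⱼ² = 4δⱼ² zⱼ²χⱼ²`.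
-/

theorem LinearMap.map_sum_smul₄ {R M₁ M₂ M₃ M₄ P ι : Type*} [CommSemiring R]
    [AddCommMonoid M₁] [AddCommMonoid M₂] [AddCommMonoid M₃] [AddCommMonoid M₄]
    [AddCommMonoid P] [Module R M₁] [Module R M₂] [Module R M₃] [Module R M₄] [Module R P]
    [Fintype ι] (T : M₁ →ₗ[R] M₂ →ₗ[R] M₃ →ₗ[R] M₄ →ₗ[R] P)
    (a₁ a₂ a₃ a₄ : ι → R) (x₁ : ι → M₁) (x₂ : ι → M₂) (x₃ : ι → M₃) (x₄ : ι → M₄) :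
    T (∑ i, a₁ i • x₁ i) (∑ j, a₂ j • x₂ j) (∑ k, a₃ k • x₃ k) (∑ l, a₄ l • x₄ l) =
      ∑ i, ∑ j, ∑ k, ∑ l, (a₁ i * a₂ j * a₃ k * a₄ l) • T (x₁ i) (x₂ j) (x₃ k) (x₄ l) := by
  simp only [map_sum T, LinearMap.sum_apply, map_smul T, LinearMap.smul_apply]
  refine Fintype.sum_congr _ _ fun i => ?_
  simp only [map_sum (T _), LinearMap.sum_apply, map_smul (T _), LinearMap.smul_apply,
    Finset.smul_sum]
  refine Fintype.sum_congr _ _ fun j => ?_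
  simp only [map_sum (T _ _), LinearMap.sum_apply, map_smul (T _ _), LinearMap.smul_apply,
    Finset.smul_sum]
  refine Fintype.sum_congr _ _ fun k => ?_
  simp only [map_sum (T _ _ _), map_smul, Finset.smul_sum, smul_smul]
  refine Fintype.sum_congr _ _ fun l => ?_
  congr 1
  ring

theorem Fin.sum_castSucc_add_last_add_sum_eq_sum_sumElim {R M : Type*} [Semiring R]
    [AddCommMonoid M] [Module R M] {n : ℕ} (c : Fin n → R) (c' : R) (d : Fin n → R)
    (x : Fin (n + 1) → M) (y : Fin n → M) :
    ∑ j, c j • x j.castSucc + c' • x (Fin.last n) + ∑ j, d j • y j =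
      ∑ s, Sum.elim (Fin.lastCases c' c) d s • Sum.elim x y s := by
  simp [Fintype.sum_sum_type, Fin.sum_univ_castSucc]

theorem Fintype.sum_four_eq_of_pairing {κ M : Type*} [Fintype κ] [DecidableEq κ]
    [AddCommMonoid M] (g : κ → κ → κ → κ → M)
    (hg : ∀ j t p q, ¬((t = j ∧ q = p) ∨ (t = p ∧ q = j)) → g j t p q = 0) :
    ∑ j, ∑ t, ∑ p, ∑ q, g j t p q =
      ∑ j, ∑ p, if j = p then g j j j j else g j j p p + g j p p j := by
  refine Fintype.sum_congr _ _ fun j => ?_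
  rw [Finset.sum_comm]
  refine Fintype.sum_congr _ _ fun p => ?_
  rw [← Fintype.sum_prod_type' (f := fun t q => g j t p q)]
  split_ifs with hjp
  · subst hjp
    exact Fintype.sum_eq_single (j, j) fun ⟨t, q⟩ hx => hg _ _ _ _ <| by simpa using hx
  · exact Fintype.sum_eq_add (j, p) (p, j) (by simp [hjp]) fun ⟨t, q⟩ hx =>
      hg _ _ _ _ <| by simpa using hx

theorem Fintype.sum_four_eq_of_pairing_of_injective {ι κ M : Type*} [Fintype ι] [Fintype κ]
    [DecidableEq ι] [DecidableEq κ] [AddCommMonoid M] {φ : κ → ι} (hφ : φ.Injective)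
    (g : ι → ι → ι → ι → M)
    (hg : ∀ s t p q, ¬((∃ j k, s = φ j ∧ t = φ j ∧ p = φ k ∧ q = φ k) ∨
      (∃ j k, s = φ j ∧ t = φ k ∧ p = φ k ∧ q = φ j)) → g s t p q = 0) :
    ∑ s, ∑ t, ∑ p, ∑ q, g s t p q =
      ∑ j, ∑ k, if j = k then g (φ j) (φ j) (φ j) (φ j)
        else g (φ j) (φ j) (φ k) (φ k) + g (φ j) (φ k) (φ k) (φ j) := by
  have hpair : ∀ s t p q, ¬((t = s ∧ q = p) ∨ (t = p ∧ q = s)) → g s t p q = 0 := by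
    refine fun s t p q h => hg s t p q ?_
    rintro (⟨j, k, rfl, rfl, rfl, rfl⟩ | ⟨j, k, rfl, rfl, rfl, rfl⟩) <;> simp at h
  have hoff : ∀ s t p q, (s ∉ Set.range φ ∨ p ∉ Set.range φ) → g s t p q = 0 := by
    refine fun s t p q h => hg s t p q ?_
    rintro (⟨j, k, rfl, -, rfl, -⟩ | ⟨j, k, rfl, -, rfl, -⟩) <;> simp at h
  rw [Fintype.sum_four_eq_of_pairing g hpair]
  refine (Fintype.sum_of_injective φ hφ _ _ (fun s hs => ?_) fun j => ?_).symm
  · refine Fintype.sum_eq_zero _ fun p => ?_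
    split_ifs <;> simp only [hoff _ _ _ _ (Or.inl hs), add_zero]
  · refine Fintype.sum_of_injective φ hφ _ _ (fun p hp => ?_) fun k => by simp [hφ.eq_iff]
    split_ifs with h
    · exact absurd ⟨j, h⟩ hp
    · simp only [hoff _ _ _ _ (Or.inr hp), add_zero]

theorem stmt13_general (n : ℕ) (δ : Fin n → ℝ) (hδ : ∀ j, δ j = 1 ∨ δ j = -1)
    (v : Fin (n + 1) → (Fin (2 * n + 1) → ℂ)) (u : Fin n → (Fin (2 * n + 1) → ℂ))
    (T : (Fin (2 * n + 1) → ℂ) →ₗ[ℂ] (Fin (2 * n + 1) → ℂ) →ₗ[ℂ]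
      (Fin (2 * n + 1) → ℂ) →ₗ[ℂ] (Fin (2 * n + 1) → ℂ) →ₗ[ℂ] ℂ)
    (hdiag : ∀ j k : Fin n,
      T (v j.castSucc) (star (v j.castSucc)) (v k.castSucc) (star (v k.castSucc)) =
        if j = k then 4 else 2 * (δ j : ℂ) * (δ k : ℂ))
    (hswap : ∀ j k : Fin n,
      T (v j.castSucc) (star (v k.castSucc)) (v k.castSucc) (star (v j.castSucc)) =
        if j = k then 4 else 2 * (δ j : ℂ) * (δ k : ℂ))
    (hzero : ∀ a b c d : Fin (n + 1) ⊕ Fin n,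
      (¬ ((∃ j k : Fin n, a = Sum.inl j.castSucc ∧ b = Sum.inl j.castSucc ∧
            c = Sum.inl k.castSucc ∧ d = Sum.inl k.castSucc) ∨
          (∃ j k : Fin n, a = Sum.inl j.castSucc ∧ b = Sum.inl k.castSucc ∧
            c = Sum.inl k.castSucc ∧ d = Sum.inl j.castSucc))) →
      T (Sum.elim v u a) (star (Sum.elim v u b)) (Sum.elim v u c)
          (star (Sum.elim v u d)) = 0) :
    ∀ (z χ : Fin n → ℂ) (w τ : ℂ),
      T (∑ j, z j • v j.castSucc + w • v (Fin.last n) + ∑ j, (z j * w) • u j)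
        (∑ j, χ j • star (v j.castSucc) + τ • star (v (Fin.last n))
          + ∑ j, (χ j * τ) • star (u j))
        (∑ j, z j • v j.castSucc + w • v (Fin.last n) + ∑ j, (z j * w) • u j)
        (∑ j, χ j • star (v j.castSucc) + τ • star (v (Fin.last n))
          + ∑ j, (χ j * τ) • star (u j))
        = 4 * ∑ j, ∑ k, (δ j : ℂ) * (δ k : ℂ) * z j * z k * χ j * χ k := by
  intro z χ w τ
  have hstar : Sum.elim (fun i => star (v i)) (fun j => star (u j)) = star ∘ Sum.elim v u :=
    (Sum.comp_elim _ _ _).symm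
  have hφ : (fun j : Fin n => (Sum.inl j.castSucc : Fin (n + 1) ⊕ Fin n)).Injective :=
    fun j k h => Fin.castSucc_injective n (Sum.inl_injective h)
  rw [Fin.sum_castSucc_add_last_add_sum_eq_sum_sumElim,
    Fin.sum_castSucc_add_last_add_sum_eq_sum_sumElim (x := fun i => star (v i)), hstar,
    T.map_sum_smul₄, Fintype.sum_four_eq_of_pairing_of_injective hφ _
      fun s t p q h => by simp only [Function.comp_apply, hzero s t p q h, smul_zero],
    Finset.mul_sum]
  refine Fintype.sum_congr _ _ fun j => ?_
  rw [Finset.mul_sum]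
  refine Fintype.sum_congr _ _ fun k => ?_
  simp only [Sum.elim_inl, Fin.lastCases_castSucc, Function.comp_apply, hdiag, hswap, smul_eq_mul]
  split_ifs with hjk
  · subst hjk
    have hδj : (δ j : ℂ) * δ j = 1 := by rcases hδ j with h | h <;> simp [h]
    linear_combination (-4 * z j * z j * χ j * χ j) * hδj
  · ring

/-- For the multilinear form `T` determined on the basis `v₁,…,v_{n+1}, u₁,…,uₙ` by the
prescribed values (with the stated symmetries, vanishing on all other basis quadruples),
and `f(z,w) = Σ zⱼvⱼ + w v_{n+1} + Σ zⱼw uⱼ`, one has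
`T(f, f̄, f, f̄) = 4 Σ_{j,k} δⱼδₖ zⱼzₖχⱼχₖ`. -/
theorem stmt13 (n : ℕ) (δ : Fin n → ℝ) (hδ : ∀ j, δ j = 1 ∨ δ j = -1)
    (v : Fin (n + 1) → (Fin (2 * n + 1) → ℂ)) (u : Fin n → (Fin (2 * n + 1) → ℂ))
    (hB : LinearIndependent ℂ (Sum.elim v u))
    (hBspan : ⊤ ≤ Submodule.span ℂ (Set.range (Sum.elim v u)))
    (T : (Fin (2 * n + 1) → ℂ) →ₗ[ℂ] (Fin (2 * n + 1) → ℂ) →ₗ[ℂ]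
      (Fin (2 * n + 1) → ℂ) →ₗ[ℂ] (Fin (2 * n + 1) → ℂ) →ₗ[ℂ] ℂ)
    (hsym1 : ∀ X₁ Y₁ X₂ Y₂, T X₁ Y₁ X₂ Y₂ = T X₂ Y₁ X₁ Y₂)
    (hsym2 : ∀ X₁ Y₁ X₂ Y₂, T X₁ Y₁ X₂ Y₂ = T X₁ Y₂ X₂ Y₁)
    (hdiag : ∀ j k : Fin n,
      T (v j.castSucc) (star (v j.castSucc)) (v k.castSucc) (star (v k.castSucc)) =
        if j = k then 4 else 2 * (δ j : ℂ) * (δ k : ℂ))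
    (hswap : ∀ j k : Fin n,
      T (v j.castSucc) (star (v k.castSucc)) (v k.castSucc) (star (v j.castSucc)) =
        if j = k then 4 else 2 * (δ j : ℂ) * (δ k : ℂ))
    (hzero : ∀ a b c d : Fin (n + 1) ⊕ Fin n,
      (¬ ((∃ j k : Fin n, a = Sum.inl j.castSucc ∧ b = Sum.inl j.castSucc ∧
            c = Sum.inl k.castSucc ∧ d = Sum.inl k.castSucc) ∨
          (∃ j k : Fin n, a = Sum.inl j.castSucc ∧ b = Sum.inl k.castSucc ∧
            c = Sum.inl k.castSucc ∧ d = Sum.inl j.castSucc))) →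
      T (Sum.elim v u a) (star (Sum.elim v u b)) (Sum.elim v u c)
          (star (Sum.elim v u d)) = 0) :
    ∀ (z χ : Fin n → ℂ) (w τ : ℂ),
      T (∑ j, z j • v j.castSucc + w • v (Fin.last n) + ∑ j, (z j * w) • u j)
        (∑ j, χ j • star (v j.castSucc) + τ • star (v (Fin.last n))
          + ∑ j, (χ j * τ) • star (u j))
        (∑ j, z j • v j.castSucc + w • v (Fin.last n) + ∑ j, (z j * w) • u j)
        (∑ j, χ j • star (v j.castSucc) + τ • star (v (Fin.last n))
          + ∑ j, (χ j * τ) • star (u j))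
        = 4 * ∑ j, ∑ k, (δ j : ℂ) * (δ k : ℂ) * z j * z k * χ j * χ k :=
  stmt13_general n δ hδ v u T hdiag hswap hzero
end

section
/- For every n ≥ 1 and every choice of signs δ₁,…,δₙ ∈ {1,−1}, let ρ(z,w) = Im w − Σⱼ δⱼ|zⱼ|² on ℂⁿ×ℂ. Then there exist a polynomial embedding H: ℂ^{n+1} → ℂ^{2n+2} of degree 2, a nondegenerate Hermitian form ⟨·,·⟩ on ℂ^{2n+1} with n negative and n+1 positive eigenvalues, and a real bihomogeneous polynomial φ(z', z̄') of bidegree (2,2) on ℂ^{2n+1}, such that with ρ'(z',w') = Im w' − ⟨z', z'⟩ − φ(z', z̄'), one has ρ' ∘ H = −4ρ² identically on ℂ^{n+1}. -/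
open Matrix ComplexConjugate

namespace Stmt14Aux

variable (n : ℕ) (δ : Fin n → ℝ)

def aIdx (k : Fin n) : Fin (2*n+1) := ⟨k, by omega⟩
def cIdx : Fin (2*n+1) := ⟨n, by omega⟩
def bIdx (k : Fin n) : Fin (2*n+1) := ⟨n+1+(k:ℕ), by omega⟩

def vV (j : Fin (n+1)) : Fin (2*n+1) → ℂ := fun i =>
  (if (i:ℕ) = (j:ℕ) then 1 else 0) + (if (i:ℕ) = n+1+(j:ℕ) then 1 else 0)

def uV (j : Fin n) : Fin (2*n+1) → ℂ := fun i =>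
  (Complex.I * δ j) *
    ((if (i:ℕ) = (j:ℕ) then 1 else 0) - (if (i:ℕ) = n+1+(j:ℕ) then 1 else 0))

def dV (i : Fin (2*n+1)) : ℂ := if (i:ℕ) ≤ n then 2 else -2

def QM : Matrix (Fin (2*n+1)) (Fin (2*n+1)) ℂ := Matrix.diagonal (dV n)

lemma QM_isHermitian : (QM n).IsHermitian := by
  refine Matrix.isHermitian_diagonal_iff.2 fun i => ?_
  unfold dV
  split <;> exact star_eq_iff_star_eq.mp (by norm_num [Complex.ext_iff])

-- index equiv
def idxEquiv : Fin n ⊕ Fin (n+1) ≃ Fin (2*n+1) :=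
  finSumFinEquiv.trans (finCongr (by omega))

lemma idxEquiv_inl (k : Fin n) : idxEquiv n (Sum.inl k) = aIdx n k := by
  ext; simp [idxEquiv, aIdx]

lemma idxEquiv_inr_zero : idxEquiv n (Sum.inr 0) = cIdx n := by
  ext; simp [idxEquiv, cIdx]

lemma idxEquiv_inr_succ (k : Fin n) : idxEquiv n (Sum.inr k.succ) = bIdx n k := by
  ext; simp [idxEquiv, bIdx]; omega

lemma sum_idx (g : Fin (2*n+1) → ℂ) :
    ∑ i, g i = (∑ k : Fin n, g (aIdx n k)) + g (cIdx n) + ∑ k : Fin n, g (bIdx n k) := by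
  rw [← Equiv.sum_comp (idxEquiv n) g, Fintype.sum_sum_type, Fin.sum_univ_succ]
  simp only [idxEquiv_inl, idxEquiv_inr_zero, idxEquiv_inr_succ]
  ring


noncomputable def P : (Fin (2*n+1) → ℂ) →ₗ[ℂ] (Fin (2*n+1) → ℂ) →ₗ[ℂ] ℂ :=
  LinearMap.mk₂ ℂ
    (fun a b => ∑ j : Fin n,
      (δ j : ℂ) * ((a (aIdx n j) + a (bIdx n j)) * (b (aIdx n j) + b (bIdx n j))))
    (by intro a a' b
        rw [← Finset.sum_add_distrib]
        exact Finset.sum_congr rfl fun j _ => by simp [Pi.add_apply]; ring)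
    (by intro c a b
        rw [Finset.smul_sum]
        exact Finset.sum_congr rfl fun j _ => by simp [Pi.smul_apply, smul_eq_mul]; ring)
    (by intro a b b'
        rw [← Finset.sum_add_distrib]
        exact Finset.sum_congr rfl fun j _ => by simp [Pi.add_apply]; ring)
    (by intro c a b
        rw [Finset.smul_sum]
        exact Finset.sum_congr rfl fun j _ => by simp [Pi.smul_apply, smul_eq_mul]; ring)

noncomputable def T : (Fin (2*n+1) → ℂ) →ₗ[ℂ] (Fin (2*n+1) → ℂ) →ₗ[ℂ]
    (Fin (2*n+1) → ℂ) →ₗ[ℂ] (Fin (2*n+1) → ℂ) →ₗ[ℂ] ℂ :=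
  LinearMap.mk₂ ℂ (fun a b => ((1/4 : ℂ) * P n δ a b) • P n δ)
    (by intro a a' b; simp [map_add, LinearMap.add_apply, mul_add, add_smul])
    (by intro c a b; simp [_root_.map_smul, smul_smul]; ring_nf)
    (by intro a b b'; simp [map_add, mul_add, add_smul])
    (by intro c a b; simp [_root_.map_smul, smul_smul]; ring_nf)

lemma T_apply (a b c d : Fin (2*n+1) → ℂ) :
    T n δ a b c d = (1/4 : ℂ) * P n δ a b * P n δ c d := by
  simp [T, LinearMap.mk₂_apply, smul_eq_mul]


lemma aIdx_val (k : Fin n) : (aIdx n k : ℕ) = (k:ℕ) := rfl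
lemma cIdx_val : (cIdx n : ℕ) = n := rfl
lemma bIdx_val (k : Fin n) : (bIdx n k : ℕ) = n+1+(k:ℕ) := rfl

noncomputable def fF (p : (Fin n → ℂ) × ℂ) : Fin (2*n+1) → ℂ :=
  ∑ j, p.1 j • vV n j.castSucc + p.2 • vV n (Fin.last n) + ∑ j, (p.1 j * p.2) • uV n δ j

lemma fF_apply (p : (Fin n → ℂ) × ℂ) (i : Fin (2*n+1)) :
    fF n δ p i = (∑ j, p.1 j * vV n j.castSucc i) + p.2 * vV n (Fin.last n) i
      + ∑ j, (p.1 j * p.2) * uV n δ j i := by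
  simp [fF, Finset.sum_apply]

lemma fF_a (p : (Fin n → ℂ) × ℂ) (k : Fin n) :
    fF n δ p (aIdx n k) = p.1 k + Complex.I * δ k * (p.1 k * p.2) := by
  have hk : (k:ℕ) < n := k.isLt
  rw [fF_apply]
  have h1 : ∑ j, p.1 j * vV n j.castSucc (aIdx n k) = p.1 k := by
    rw [Finset.sum_eq_single k]
    · have e2 : ¬ ((k:ℕ) = n+1+(k:ℕ)) := by omega
      simp [vV, aIdx_val, e2]
    · intro j _ hj
      have e1 : ¬ ((k:ℕ) = (j:ℕ)) := fun h => hj ((Fin.ext h).symm)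
      have e2 : ¬ ((k:ℕ) = n+1+(j:ℕ)) := by omega
      simp [vV, aIdx_val, e1, e2]
    · simp
  have h2 : vV n (Fin.last n) (aIdx n k) = 0 := by
    have e1 : ¬ ((k:ℕ) = n) := by omega
    have e2 : ¬ ((k:ℕ) = n+1+n) := by omega
    simp [vV, aIdx_val, e1, e2]
  have h3 : ∑ j, (p.1 j * p.2) * uV n δ j (aIdx n k)
      = Complex.I * δ k * (p.1 k * p.2) := by
    rw [Finset.sum_eq_single k]
    · have e2 : ¬ ((k:ℕ) = n+1+(k:ℕ)) := by omega
      simp [uV, aIdx_val, e2]; ring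
    · intro j _ hj
      have e1 : ¬ ((k:ℕ) = (j:ℕ)) := fun h => hj ((Fin.ext h).symm)
      have e2 : ¬ ((k:ℕ) = n+1+(j:ℕ)) := by omega
      simp [uV, aIdx_val, e1, e2]
    · simp
  rw [h1, h2, h3]; ring

lemma fF_c (p : (Fin n → ℂ) × ℂ) : fF n δ p (cIdx n) = p.2 := by
  rw [fF_apply]
  have h1 : ∑ j, p.1 j * vV n j.castSucc (cIdx n) = 0 := by
    apply Finset.sum_eq_zero
    intro j _
    have hj : (j:ℕ) < n := j.isLt
    have e1 : ¬ (n = (j:ℕ)) := by omega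
    have e2 : ¬ (n = n+1+(j:ℕ)) := by omega
    simp [vV, cIdx_val, e1, e2]
  have h2 : vV n (Fin.last n) (cIdx n) = 1 := by
    have e2 : ¬ (n = n+1+n) := by omega
    simp [vV, cIdx_val, e2]
  have h3 : ∑ j, (p.1 j * p.2) * uV n δ j (cIdx n) = 0 := by
    apply Finset.sum_eq_zero
    intro j _
    have hj : (j:ℕ) < n := j.isLt
    have e1 : ¬ (n = (j:ℕ)) := by omega
    have e2 : ¬ (n = n+1+(j:ℕ)) := by omega
    simp [uV, cIdx_val, e1, e2]
  rw [h1, h2, h3]; ring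

lemma fF_b (p : (Fin n → ℂ) × ℂ) (k : Fin n) :
    fF n δ p (bIdx n k) = p.1 k - Complex.I * δ k * (p.1 k * p.2) := by
  have hk : (k:ℕ) < n := k.isLt
  rw [fF_apply]
  have h1 : ∑ j, p.1 j * vV n j.castSucc (bIdx n k) = p.1 k := by
    rw [Finset.sum_eq_single k]
    · have e1 : ¬ (n+1+(k:ℕ) = (k:ℕ)) := by omega
      simp [vV, bIdx_val, e1]
    · intro j _ hj
      have hjk : (j:ℕ) < n := j.isLt
      have e1 : ¬ (n+1+(k:ℕ) = (j:ℕ)) := by omega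
      have e2 : ¬ (n+1+(k:ℕ) = n+1+(j:ℕ)) := by
        intro h; exact hj ((Fin.ext (by omega : (k:ℕ) = (j:ℕ))).symm)
      simp [vV, bIdx_val, e1, e2]
      exact fun h => absurd (Fin.ext h).symm hj
    · simp
  have h2 : vV n (Fin.last n) (bIdx n k) = 0 := by
    have e1 : ¬ (n+1+(k:ℕ) = n) := by omega
    have e2 : ¬ (n+1+(k:ℕ) = n+1+n) := by omega
    simp [vV, bIdx_val, e1, e2]
    omega
  have h3 : ∑ j, (p.1 j * p.2) * uV n δ j (bIdx n k)
      = - (Complex.I * δ k * (p.1 k * p.2)) := by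
    rw [Finset.sum_eq_single k]
    · have e1 : ¬ (n+1+(k:ℕ) = (k:ℕ)) := by omega
      simp [uV, bIdx_val, e1]; ring
    · intro j _ hj
      have hjk : (j:ℕ) < n := j.isLt
      have e1 : ¬ (n+1+(k:ℕ) = (j:ℕ)) := by omega
      have e2 : ¬ (n+1+(k:ℕ) = n+1+(j:ℕ)) := by
        intro h; exact hj ((Fin.ext (by omega : (k:ℕ) = (j:ℕ))).symm)
      simp [uV, bIdx_val, e1, e2]
      exact fun h => absurd (Fin.ext h).symm hj
    · simp
  rw [h1, h2, h3]; ring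


lemma dV_a (k : Fin n) : dV n (aIdx n k) = 2 := by
  have h : ((aIdx n k : ℕ) ≤ n) := by rw [aIdx_val]; have := k.isLt; omega
  simp [dV, h]

lemma dV_c : dV n (cIdx n) = 2 := by simp [dV, cIdx_val]

lemma dV_b (k : Fin n) : dV n (bIdx n k) = -2 := by
  have h : ¬ ((bIdx n k : ℕ) ≤ n) := by rw [bIdx_val]; omega
  simp [dV, h]

lemma QF_eq (p : (Fin n → ℂ) × ℂ) :
    dotProduct (star (fF n δ p)) ((QM n).mulVec (fF n δ p)) =
      2 * (p.2 * conj p.2) + 4 * Complex.I * (p.2 - conj p.2) *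
        ∑ j, (δ j : ℂ) * p.1 j * conj (p.1 j) := by
  have key : dotProduct (star (fF n δ p)) ((QM n).mulVec (fF n δ p))
      = ∑ i, conj (fF n δ p i) * (dV n i * fF n δ p i) := by
    simp [dotProduct, QM, Matrix.mulVec_diagonal]
  rw [key, sum_idx]
  have hc : conj (fF n δ p (cIdx n)) * (dV n (cIdx n) * fF n δ p (cIdx n))
      = 2 * (p.2 * conj p.2) := by
    rw [fF_c, dV_c]; ring
  have hsum : (∑ k : Fin n, conj (fF n δ p (aIdx n k)) * (dV n (aIdx n k) * fF n δ p (aIdx n k)))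
      + ∑ k : Fin n, conj (fF n δ p (bIdx n k)) * (dV n (bIdx n k) * fF n δ p (bIdx n k))
      = 4 * Complex.I * (p.2 - conj p.2) * ∑ j, (δ j : ℂ) * p.1 j * conj (p.1 j) := by
    rw [← Finset.sum_add_distrib, Finset.mul_sum]
    refine Finset.sum_congr rfl fun k _ => ?_
    rw [fF_a, fF_b, dV_a, dV_b]
    simp only [map_add, map_sub, _root_.map_mul, Complex.conj_I, Complex.conj_ofReal]
    ring
  rw [hc]
  linear_combination hsum


lemma P_fF (p : (Fin n → ℂ) × ℂ) :
    P n δ (fF n δ p) (star (fF n δ p)) = 4 * ∑ j, (δ j : ℂ) * p.1 j * conj (p.1 j) := by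
  rw [P]
  simp only [LinearMap.mk₂_apply]
  rw [Finset.mul_sum]
  refine Finset.sum_congr rfl fun j _ => ?_
  have ha : (star (fF n δ p)) (aIdx n j) = conj (fF n δ p (aIdx n j)) := rfl
  have hb : (star (fF n δ p)) (bIdx n j) = conj (fF n δ p (bIdx n j)) := rfl
  rw [ha, hb, fF_a, fF_b, ← map_add]
  have h2 : fF n δ p (aIdx n j) + fF n δ p (bIdx n j) = 2 * p.1 j := by
    rw [fF_a, fF_b]; ring
  rw [fF_a, fF_b] at h2
  rw [h2, _root_.map_mul]
  simp only [Complex.conj_ofNat]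
  ring

lemma phi_fF (p : (Fin n → ℂ) × ℂ) :
    T n δ (fF n δ p) (star (fF n δ p)) (fF n δ p) (star (fF n δ p)) =
      4 * (∑ j, (δ j : ℂ) * p.1 j * conj (p.1 j)) ^ 2 := by
  rw [T_apply, P_fF]
  ring

lemma P_real (z' : Fin (2*n+1) → ℂ) :
    ∃ r : ℝ, P n δ z' (star z') = (r : ℂ) := by
  refine ⟨∑ j, δ j * Complex.normSq (z' (aIdx n j) + z' (bIdx n j)), ?_⟩
  rw [P]
  simp only [LinearMap.mk₂_apply]
  push_cast
  refine Finset.sum_congr rfl fun j _ => ?_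
  have ha : (star z') (aIdx n j) = conj (z' (aIdx n j)) := rfl
  have hb : (star z') (bIdx n j) = conj (z' (bIdx n j)) := rfl
  rw [ha, hb, ← map_add, ← Complex.mul_conj]

lemma phi_im (z' : Fin (2*n+1) → ℂ) :
    (T n δ z' (star z') z' (star z')).im = 0 := by
  obtain ⟨r, hr⟩ := P_real n δ z'
  rw [T_apply, hr]
  have : (1/4 : ℂ) * r * r = ((1/4*r*r : ℝ) : ℂ) := by push_cast; ring
  rw [this, Complex.ofReal_im]


lemma QM_det_isUnit : IsUnit (QM n).det := by
  rw [QM, Matrix.det_diagonal, isUnit_iff_ne_zero]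
  exact Finset.prod_ne_zero_iff.2 fun i _ => by unfold dV; split <;> norm_num

lemma QM_mul_self : QM n * QM n = (4:ℂ) • (1 : Matrix (Fin (2*n+1)) (Fin (2*n+1)) ℂ) := by
  rw [QM, Matrix.diagonal_mul_diagonal, ← Matrix.diagonal_one, ← Matrix.diagonal_smul]
  refine congrArg Matrix.diagonal ?_
  funext i
  show dV n i * dV n i = (4:ℂ) • (1:ℂ)
  unfold dV
  split <;> norm_num

lemma eig_sq (i : Fin (2*n+1)) :
    (QM_isHermitian n).eigenvalues i = 2 ∨ (QM_isHermitian n).eigenvalues i = -2 := by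
  set hQ := QM_isHermitian n
  set r := hQ.eigenvalues i with hr
  have hv := hQ.mulVec_eigenvectorBasis i
  have h2 : QM n *ᵥ (QM n *ᵥ ⇑(hQ.eigenvectorBasis i)) = (4:ℂ) • ⇑(hQ.eigenvectorBasis i) := by
    rw [Matrix.mulVec_mulVec, QM_mul_self, Matrix.smul_mulVec, Matrix.one_mulVec]
  rw [hv, Matrix.mulVec_smul, hv, smul_smul] at h2
  have hvne : ⇑(hQ.eigenvectorBasis i) ≠ 0 := by
    intro h
    exact hQ.eigenvectorBasis.orthonormal.ne_zero i (by ext j; exact congrFun h j)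
  obtain ⟨j, hj⟩ := Function.ne_iff.1 hvne
  have h3 : ((r:ℂ) * (r:ℂ)) * (hQ.eigenvectorBasis i) j = (4:ℂ) * (hQ.eigenvectorBasis i) j := by
    have := congrFun h2 j
    simpa [Pi.smul_apply, Complex.real_smul, mul_assoc] using this
  have h4 : ((r:ℂ) * (r:ℂ)) = 4 := by
    exact mul_right_cancel₀ hj h3
  have h5 : r * r = 4 := by exact_mod_cast h4
  have : (r - 2) * (r + 2) = 0 := by nlinarith
  rcases mul_eq_zero.1 this with h | h
  · left; linarith
  · right; linarith

lemma trace_QM : (QM n).trace = 2 := by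
  rw [QM, Matrix.trace_diagonal, sum_idx]
  simp [dV_a, dV_c, dV_b, Finset.sum_const, nsmul_eq_mul]

lemma sum_eig : ∑ i, (QM_isHermitian n).eigenvalues i = 2 := by
  have h1 : (QM n).trace = ∑ i, (((QM_isHermitian n).eigenvalues i : ℝ) : ℂ) := by
    conv_lhs => rw [(QM_isHermitian n).spectral_theorem]
    rw [Unitary.conjStarAlgAut_apply, Matrix.trace_mul_cycle]
    rw [show (star ((QM_isHermitian n).eigenvectorUnitary : Matrix (Fin (2*n+1)) (Fin (2*n+1)) ℂ)) *
      ((QM_isHermitian n).eigenvectorUnitary : Matrix (Fin (2*n+1)) (Fin (2*n+1)) ℂ) = 1 from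
        Unitary.coe_star_mul_self _]
    rw [one_mul, Matrix.trace_diagonal]
    simp [Function.comp]
  rw [trace_QM] at h1
  have h2 : ((∑ i, (QM_isHermitian n).eigenvalues i : ℝ) : ℂ) = ((2:ℝ):ℂ) := by
    push_cast
    rw [← h1]
  exact_mod_cast h2

lemma card_eigs : Nat.card {i // 0 < (QM_isHermitian n).eigenvalues i} = n+1 ∧
    Nat.card {i // (QM_isHermitian n).eigenvalues i < 0} = n := by
  classical
  set E := (QM_isHermitian n).eigenvalues with hE
  have hsplit : ∀ i, E i = 2 ∨ E i = -2 := eig_sq n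
  set s := Finset.univ.filter (fun i => 0 < E i) with hs
  set t := Finset.univ.filter (fun i => ¬ 0 < E i) with ht
  have hcard : s.card + t.card = 2*n+1 := by
    rw [hs, ht, Finset.card_filter_add_card_filter_not]
    simp
  have hsum : (∑ i ∈ s, E i) + ∑ i ∈ t, E i = 2 := by
    rw [hs, ht, Finset.sum_filter_add_sum_filter_not]
    exact sum_eig n
  have hss : ∑ i ∈ s, E i = (s.card : ℝ) * 2 := by
    rw [Finset.sum_congr rfl (fun i hi => ?_), Finset.sum_const, nsmul_eq_mul]
    rcases hsplit i with h | h
    · exact h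
    · exfalso
      rw [hs, Finset.mem_filter] at hi
      rw [h] at hi
      linarith [hi.2]
  have hts : ∑ i ∈ t, E i = (t.card : ℝ) * (-2) := by
    rw [Finset.sum_congr rfl (fun i hi => ?_), Finset.sum_const, nsmul_eq_mul]
    rcases hsplit i with h | h
    · exfalso
      rw [ht, Finset.mem_filter] at hi
      rw [h] at hi
      exact hi.2 (by norm_num)
    · exact h
  rw [hss, hts] at hsum
  have hnat : s.card = t.card + 1 := by
    have : (s.card : ℝ) = (t.card : ℝ) + 1 := by linarith
    exact_mod_cast this
  have hcs : s.card = n + 1 := by omega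
  have hct : t.card = n := by omega
  constructor
  · rw [Nat.card_eq_fintype_card, Fintype.card_subtype]
    exact hcs
  · rw [Nat.card_eq_fintype_card, Fintype.card_subtype]
    rw [show Finset.univ.filter (fun i => E i < 0) = t from ?_]
    · exact hct
    · rw [ht]
      apply Finset.filter_congr
      intro i _
      rcases hsplit i with h | h <;> rw [h] <;> norm_num
  

noncomputable def gF (z : Fin (n+1) → ℂ) (y : Fin n → ℂ) : Fin (2*n+1) → ℂ :=
  ∑ j, z j • vV n j + ∑ k, y k • uV n δ k

lemma gF_apply (z : Fin (n+1) → ℂ) (y : Fin n → ℂ) (i : Fin (2*n+1)) :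
    gF n δ z y i = (∑ j, z j * vV n j i) + ∑ k, y k * uV n δ k i := by
  simp [gF, Finset.sum_apply]

lemma gF_a (z : Fin (n+1) → ℂ) (y : Fin n → ℂ) (k : Fin n) :
    gF n δ z y (aIdx n k) = z k.castSucc + Complex.I * δ k * y k := by
  have hk : (k:ℕ) < n := k.isLt
  rw [gF_apply]
  have h1 : ∑ j, z j * vV n j (aIdx n k) = z k.castSucc := by
    rw [Finset.sum_eq_single k.castSucc]
    · have e2 : ¬ ((k:ℕ) = n+1+((k.castSucc : Fin (n+1)):ℕ)) := by simp
      simp [vV, aIdx_val, e2]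
    · intro j _ hj
      have e1 : ¬ ((k:ℕ) = (j:ℕ)) := by
        intro h
        exact hj (Fin.ext (by simpa using h.symm))
      have e2 : ¬ ((k:ℕ) = n+1+(j:ℕ)) := by
        have := j.isLt; omega
      simp [vV, aIdx_val, e1, e2]
    · simp
  have h2 : ∑ j, y j * uV n δ j (aIdx n k) = Complex.I * δ k * y k := by
    rw [Finset.sum_eq_single k]
    · have e2 : ¬ ((k:ℕ) = n+1+(k:ℕ)) := by omega
      simp [uV, aIdx_val, e2]
      ring
    · intro j _ hj
      have e1 : ¬ ((k:ℕ) = (j:ℕ)) := fun h => hj ((Fin.ext h).symm)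
      have e2 : ¬ ((k:ℕ) = n+1+(j:ℕ)) := by omega
      simp [uV, aIdx_val, e1, e2]
    · simp
  rw [h1, h2]

lemma gF_c (z : Fin (n+1) → ℂ) (y : Fin n → ℂ) :
    gF n δ z y (cIdx n) = z (Fin.last n) := by
  rw [gF_apply]
  have h1 : ∑ j, z j * vV n j (cIdx n) = z (Fin.last n) := by
    rw [Finset.sum_eq_single (Fin.last n)]
    · have e2 : ¬ (n = n+1+n) := by omega
      simp [vV, cIdx_val, e2]
    · intro j _ hj
      have hjl : (j:ℕ) < n := by
        rcases Fin.lt_or_eq_of_le (Fin.le_last j) with h | h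
        · exact (Fin.lt_iff_val_lt_val.mp h).trans_le (by simp)
        · exact absurd h hj
      have e1 : ¬ (n = (j:ℕ)) := by omega
      have e2 : ¬ (n = n+1+(j:ℕ)) := by omega
      simp [vV, cIdx_val, e1, e2]
    · simp
  have h2 : ∑ j, y j * uV n δ j (cIdx n) = 0 := by
    apply Finset.sum_eq_zero
    intro j _
    have hj : (j:ℕ) < n := j.isLt
    have e1 : ¬ (n = (j:ℕ)) := by omega
    have e2 : ¬ (n = n+1+(j:ℕ)) := by omega
    simp [uV, cIdx_val, e1, e2]
  rw [h1, h2, add_zero]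

lemma gF_b (z : Fin (n+1) → ℂ) (y : Fin n → ℂ) (k : Fin n) :
    gF n δ z y (bIdx n k) = z k.castSucc - Complex.I * δ k * y k := by
  have hk : (k:ℕ) < n := k.isLt
  rw [gF_apply]
  have h1 : ∑ j, z j * vV n j (bIdx n k) = z k.castSucc := by
    rw [Finset.sum_eq_single k.castSucc]
    · have e1 : ¬ (n+1+(k:ℕ) = (k:ℕ)) := by omega
      simp [vV, bIdx_val, e1]
    · intro j _ hj
      have hne : ¬ ((k:ℕ) = (j:ℕ)) := by
        intro h
        exact hj (Fin.ext (by simpa using h.symm))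
      have e1 : ¬ (n+1+(k:ℕ) = (j:ℕ)) := by have := j.isLt; omega
      have e2 : ¬ (n+1+(k:ℕ) = n+1+(j:ℕ)) := by omega
      simp [vV, bIdx_val, e1, e2]
      exact fun h => absurd h hne
    · simp
  have h2 : ∑ j, y j * uV n δ j (bIdx n k) = -(Complex.I * δ k * y k) := by
    rw [Finset.sum_eq_single k]
    · have e1 : ¬ (n+1+(k:ℕ) = (k:ℕ)) := by omega
      simp [uV, bIdx_val, e1]
      ring
    · intro j _ hj
      have hne : ¬ ((k:ℕ) = (j:ℕ)) := fun h => hj ((Fin.ext h).symm)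
      have e1 : ¬ (n+1+(k:ℕ) = (j:ℕ)) := by have := j.isLt; omega
      have e2 : ¬ (n+1+(k:ℕ) = n+1+(j:ℕ)) := by omega
      simp [uV, bIdx_val, e1, e2]
      exact fun h => absurd h hne
    · simp
  rw [h1, h2]
  ring

lemma linIndep (hδ : ∀ j, δ j = 1 ∨ δ j = -1) :
    LinearIndependent ℂ (Sum.elim (vV n) (uV n δ)) := by
  rw [Fintype.linearIndependent_iff]
  intro g hg
  have hg' : gF n δ (fun j => g (Sum.inl j)) (fun k => g (Sum.inr k)) = 0 := by
    rw [gF]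
    rw [Fintype.sum_sum_type] at hg
    simpa using hg
  have hδne : ∀ k, (δ k : ℂ) ≠ 0 := by
    intro k
    rcases hδ k with h | h <;> rw [h] <;> norm_num
  have hy : ∀ k : Fin n, g (Sum.inr k) = 0 := by
    intro k
    have ha := congrFun hg' (aIdx n k)
    have hb := congrFun hg' (bIdx n k)
    rw [gF_a] at ha
    rw [gF_b] at hb
    simp only [Pi.zero_apply] at ha hb
    have h3 : Complex.I * (δ k:ℂ) * g (Sum.inr k) = 0 := by linear_combination (ha - hb) / 2
    have h4 : Complex.I * (δ k:ℂ) ≠ 0 := mul_ne_zero Complex.I_ne_zero (hδne k)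
    exact (mul_eq_zero.mp h3).resolve_left h4
  have hz : ∀ j : Fin (n+1), g (Sum.inl j) = 0 := by
    intro j
    refine Fin.lastCases ?_ ?_ j
    · have hc := congrFun hg' (cIdx n)
      rw [gF_c] at hc
      simpa using hc
    · intro k
      have ha := congrFun hg' (aIdx n k)
      have hb := congrFun hg' (bIdx n k)
      rw [gF_a] at ha
      rw [gF_b] at hb
      simp only [Pi.zero_apply] at ha hb
      linear_combination (ha + hb) / 2
  intro i
  cases i with
  | inl j => exact hz j
  | inr k => exact hy k


noncomputable def RL : ((Fin (2*n+1) → ℂ) × ℂ) →ₗ[ℂ] ((Fin n → ℂ) × ℂ) where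
  toFun q := (fun k => (q.1 (aIdx n k) + q.1 (bIdx n k))/2, q.1 (cIdx n))
  map_add' q r := by
    refine Prod.ext ?_ ?_
    · funext k
      simp only [Prod.fst_add, Pi.add_apply]
      ring
    · simp
  map_smul' c q := by
    refine Prod.ext ?_ ?_
    · funext k
      simp only [Prod.smul_fst, Pi.smul_apply, smul_eq_mul, RingHom.id_apply]
      ring
    · simp

lemma RL_fF (p : (Fin n → ℂ) × ℂ) (t : ℂ) : RL n (fF n δ p, t) = p := by
  refine Prod.ext ?_ ?_
  · funext k
    show (fF n δ p (aIdx n k) + fF n δ p (bIdx n k))/2 = p.1 k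
    rw [fF_a, fF_b]
    ring
  · exact fF_c n δ p

noncomputable def RC : ((Fin (2*n+1) → ℂ) × ℂ) →L[ℂ] ((Fin n → ℂ) × ℂ) :=
  LinearMap.toContinuousLinearMap (RL n)

lemma RC_fF (p : (Fin n → ℂ) × ℂ) (t : ℂ) : RC n (fF n δ p, t) = p := RL_fF n δ p t

lemma fF_differentiable : Differentiable ℂ (fF n δ) := by
  have h1 : ∀ j : Fin n, Differentiable ℂ (fun p : (Fin n → ℂ) × ℂ => p.1 j) := by
    intro j
    exact (ContinuousLinearMap.proj j : (Fin n → ℂ) →L[ℂ] ℂ).differentiable.comp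
      differentiable_fst
  have h2 : Differentiable ℂ (fun p : (Fin n → ℂ) × ℂ =>
      ∑ j, p.1 j • vV n j.castSucc) := by
    apply Differentiable.fun_sum
    intro j _
    exact (h1 j).smul_const _
  have h3 : Differentiable ℂ (fun p : (Fin n → ℂ) × ℂ => p.2 • vV n (Fin.last n)) :=
    differentiable_snd.smul_const _
  have h4 : Differentiable ℂ (fun p : (Fin n → ℂ) × ℂ =>
      ∑ j, (p.1 j * p.2) • uV n δ j) := by
    apply Differentiable.fun_sum
    intro j _
    exact ((h1 j).mul differentiable_snd).smul_const _
  exact fun p => ((((h2 p).add (h3 p)).add (h4 p)) : DifferentiableAt ℂ _ p)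

lemma main_alg (w b s : ℂ) :
    (2*Complex.I*w^2 - (-(2*Complex.I*b^2)))/(2*Complex.I)
      - (2*(w*b) + 4*Complex.I*(w-b)*s) - 4*s^2
      = -4 * ((w - b)/(2*Complex.I) - s)^2 := by
  have h2I : (2*Complex.I) ≠ 0 := by
    simp [Complex.I_ne_zero]
  have h3 : (2*Complex.I*w^2 - (-(2*Complex.I*b^2))) / (2*Complex.I) = w^2 + b^2 := by
    rw [div_eq_iff h2I]
    ring
  have h4 : (w - b)/(2*Complex.I) = -(Complex.I * (w - b))/2 := by
    rw [div_eq_div_iff h2I (by norm_num : (2:ℂ) ≠ 0)]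
    linear_combination (2*(w-b)) * Complex.I_sq
  rw [h3, h4]
  linear_combination (w - b)^2 * Complex.I_sq

end Stmt14Aux

/-- For any signs `δⱼ = ±1` and `ρ(z,w) = Im w - Σ δⱼ|zⱼ|²` on `ℂⁿ×ℂ`, there exist a
degree-2 polynomial embedding `H : ℂ^{n+1} → ℂ^{2n+2}` (of the explicit form
`H(z,w) = (Σ zⱼvⱼ + w v_{n+1} + Σ zⱼw uⱼ, 2iw²)` with linearly independent vectors),
a nondegenerate Hermitian form `⟨·,·⟩` on `ℂ^{2n+1}` with `n` negative and `n+1` positive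
eigenvalues, and a real bihomogeneous polynomial `φ` of bidegree `(2,2)` (given by a
quadrilinear form `T`), such that with `ρ'(z',w') = Im w' - ⟨z',z'⟩ - φ(z',z̄')` one has
`ρ' ∘ H = -4ρ²` identically. -/
theorem stmt14 (n : ℕ) (hn : 1 ≤ n) (δ : Fin n → ℝ) (hδ : ∀ j, δ j = 1 ∨ δ j = -1) :
    ∃ (v : Fin (n + 1) → (Fin (2 * n + 1) → ℂ)) (u : Fin n → (Fin (2 * n + 1) → ℂ))
      (Q : Matrix (Fin (2 * n + 1)) (Fin (2 * n + 1)) ℂ) (hQ : Q.IsHermitian)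
      (T : (Fin (2 * n + 1) → ℂ) →ₗ[ℂ] (Fin (2 * n + 1) → ℂ) →ₗ[ℂ]
        (Fin (2 * n + 1) → ℂ) →ₗ[ℂ] (Fin (2 * n + 1) → ℂ) →ₗ[ℂ] ℂ),
      LinearIndependent ℂ (Sum.elim v u) ∧
      IsUnit Q.det ∧
      Nat.card {i // 0 < hQ.eigenvalues i} = n + 1 ∧
      Nat.card {i // hQ.eigenvalues i < 0} = n ∧
      (let ρ : (Fin n → ℂ) × ℂ → ℂ := fun p =>
        (p.2 - conj p.2) / (2 * Complex.I) - ∑ j, (δ j : ℂ) * p.1 j * conj (p.1 j)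
       let f : (Fin n → ℂ) × ℂ → (Fin (2 * n + 1) → ℂ) := fun p =>
        ∑ j, p.1 j • v j.castSucc + p.2 • v (Fin.last n) + ∑ j, (p.1 j * p.2) • u j
       let H : (Fin n → ℂ) × ℂ → (Fin (2 * n + 1) → ℂ) × ℂ := fun p =>
        (f p, 2 * Complex.I * p.2 ^ 2)
       let φ : (Fin (2 * n + 1) → ℂ) → ℂ := fun z' => T z' (star z') z' (star z')
       let ρ' : (Fin (2 * n + 1) → ℂ) × ℂ → ℂ := fun q =>
        (q.2 - conj q.2) / (2 * Complex.I) - dotProduct (star q.1) (Q.mulVec q.1) - φ q.1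
       Function.Injective H ∧
       (∀ p, Function.Injective (fderiv ℂ H p)) ∧
       (∀ z', (φ z').im = 0) ∧
       (∀ p, ρ' (H p) = -4 * ρ p ^ 2)) := by
  classical
  refine ⟨Stmt14Aux.vV n, Stmt14Aux.uV n δ, Stmt14Aux.QM n, Stmt14Aux.QM_isHermitian n,
    Stmt14Aux.T n δ, Stmt14Aux.linIndep n δ hδ, Stmt14Aux.QM_det_isUnit n,
    (Stmt14Aux.card_eigs n).1, (Stmt14Aux.card_eigs n).2, ?_⟩
  intro ρ f H φ ρ'
  have hH : Differentiable ℂ H := by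
    refine Differentiable.prodMk ?_ ?_
    · exact Stmt14Aux.fF_differentiable n δ
    · exact (differentiable_snd.pow 2).const_mul (2*Complex.I)
  have hRCH : ∀ q, Stmt14Aux.RC n (H q) = q := fun q =>
    Stmt14Aux.RC_fF n δ q (2 * Complex.I * q.2 ^ 2)
  refine ⟨?_, ?_, ?_, ?_⟩
  · -- injectivity of H
    intro p q h
    rw [← hRCH p, ← hRCH q, h]
  · -- injectivity of the differential
    intro p
    have hcomp : (fun q => Stmt14Aux.RC n (H q)) = id := funext hRCH
    have hd : fderiv ℂ (fun q => Stmt14Aux.RC n (H q)) p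
        = (Stmt14Aux.RC n).comp (fderiv ℂ H p) := by
      have h1 := fderiv_comp (𝕜 := ℂ) (x := p) ((Stmt14Aux.RC n).differentiableAt) (hH p)
      rw [ContinuousLinearMap.fderiv] at h1
      exact h1
    rw [hcomp, fderiv_id] at hd
    intro x y hxy
    have h5 : (Stmt14Aux.RC n).comp (fderiv ℂ H p) x
        = (Stmt14Aux.RC n).comp (fderiv ℂ H p) y := by
      simp only [ContinuousLinearMap.comp_apply, hxy]
    rw [← hd] at h5
    simpa using h5
  · -- φ is real valued
    intro z'
    exact Stmt14Aux.phi_im n δ z'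
  · -- the main identity
    intro p
    show (2 * Complex.I * p.2 ^ 2 - conj (2 * Complex.I * p.2 ^ 2)) / (2 * Complex.I)
        - dotProduct (star (Stmt14Aux.fF n δ p)) ((Stmt14Aux.QM n).mulVec (Stmt14Aux.fF n δ p))
        - Stmt14Aux.T n δ (Stmt14Aux.fF n δ p) (star (Stmt14Aux.fF n δ p))
            (Stmt14Aux.fF n δ p) (star (Stmt14Aux.fF n δ p))
      = -4 * ((p.2 - conj p.2) / (2 * Complex.I)
          - ∑ j, (δ j : ℂ) * p.1 j * conj (p.1 j)) ^ 2
    rw [Stmt14Aux.QF_eq n δ p, Stmt14Aux.phi_fF n δ p]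
    have hconj : conj (2 * Complex.I * p.2 ^ 2) = -(2 * Complex.I * (conj p.2) ^ 2) := by
      simp only [_root_.map_mul, map_pow, Complex.conj_I, Complex.conj_ofNat]
      ring
    rw [hconj]
    exact Stmt14Aux.main_alg p.2 (conj p.2) (∑ j, (δ j : ℂ) * p.1 j * conj (p.1 j))
end
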